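/- arXiv:0807.3105 — 2 statements merged into one kernel-verified Lean document; each statement's English description precedes it below -/
import Mathlib

section
/- Let 0 → M → S → N → 0 be a short exact sequence of k[G̃]-modules. Then this sequence is split if and only if the restricted short exact sequence 0 → Res_G M → Res_G S → Res_G N → 0 of k[G]-modules (obtained by restricting the same maps to k[G]-module homomorphisms) is split. -/
/-!
If `γ` is a `k[G]`-linear section of `β`, then so is each conjugate `t • γ (t⁻¹ • -)` with
`t ∈ G̃`, and this conjugate depends only on the coset `tG`. Summing it over `G̃ ⧸ G` gives a
`G̃`-equivariant map, and `β` sends the sum to `[G̃ : G] • id`. The index is coprime to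
`p = char k`, hence invertible in `k`, so dividing by it yields a `k[G̃]`-linear section.
The converse direction is restriction of scalars.
-/

open scoped Ring

noncomputable section

namespace MonoidAlgebra

variable {k G : Type*} [CommSemiring k] [Group G]

abbrev restrictModule (H : Subgroup G) (V : Type*) [AddCommMonoid V] [Module k[G] V] :
    Module k[H] V :=
  Module.compHom V (mapDomainRingHom k H.subtype)

attribute [local instance] restrictModule

variable {H : Subgroup G} {V W : Type*} [AddCommMonoid V] [Module k[G] V]
  [AddCommMonoid W] [Module k[G] W]

theorem single_smul_restrict (h : H) (r : k) (v : V) : single h r • v = single (h : G) r • v := by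
  change mapDomainRingHom k H.subtype (single h r) • v = _
  rw [mapDomainRingHom_apply, mapDomain_single, Subgroup.coe_subtype]

def _root_.LinearMap.restrictSubgroup (H : Subgroup G) (f : W →ₗ[k[G]] V) : W →ₗ[k[H]] V where
  toFun := f
  map_add' := f.map_add
  map_smul' a := f.map_smul (mapDomainRingHom k H.subtype a)

theorem map_single_smul_of_mem (f : W →ₗ[k[H]] V) {g : G} (hg : g ∈ H) (r : k) (w : W) :
    f (single g r • w) = single g r • f w := by
  simpa only [single_smul_restrict] using f.map_smul (single ⟨g, hg⟩ r) w

theorem map_of_smul_of_mem (f : W →ₗ[k[H]] V) {g : G} (hg : g ∈ H) (w : W) :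
    f (of k G g • w) = of k G g • f w := by
  simpa only [of_apply] using map_single_smul_of_mem f hg 1 w

theorem single_one_smul_comm (r : k) (a : k[G]) (v : V) :
    single (1 : G) r • a • v = a • single (1 : G) r • v := by
  rw [smul_smul, smul_smul, single_one_comm]

theorem of_mul_smul_map_of_mem (f : W →ₗ[k[H]] V) (t : G) {h : G} (hh : h ∈ H) (w : W) :
    of k G (t * h) • f (of k G (t * h)⁻¹ • w) = of k G t • f (of k G t⁻¹ • w) := by
  rw [mul_inv_rev, map_mul (of k G) h⁻¹, mul_smul (of k G h⁻¹), map_of_smul_of_mem f (inv_mem hh),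
    ← mul_smul, ← map_mul, mul_inv_cancel_right]

section Finite

variable [Fintype (G ⧸ H)]

def cosetSum (f : W →ₗ[k[H]] V) (w : W) : V :=
  ∑ q : G ⧸ H, of k G q.out • f (of k G q.out⁻¹ • w)

theorem cosetSum_add (f : W →ₗ[k[H]] V) (w₁ w₂ : W) :
    cosetSum f (w₁ + w₂) = cosetSum f w₁ + cosetSum f w₂ := by
  simp only [cosetSum, smul_add, map_add, Finset.sum_add_distrib]

-- The reindexing `q ↦ g • q` of `G ⧸ H` changes the representatives only by elements of `H`.
theorem cosetSum_of_smul (f : W →ₗ[k[H]] V) (g : G) (w : W) :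
    cosetSum f (of k G g • w) = of k G g • cosetSum f w := by
  rw [cosetSum, cosetSum, Finset.smul_sum, ← Equiv.sum_comp (MulAction.toPerm g)]
  refine Finset.sum_congr rfl fun q _ => ?_
  obtain ⟨h, hh⟩ := QuotientGroup.mk_out_eq_mul H (g * q.out)
  have hq : (MulAction.toPerm g q).out = g * q.out * h := by
    rw [← hh, MulAction.toPerm_apply, ← smul_eq_mul, ← MulAction.Quotient.smul_mk,
      QuotientGroup.out_eq']
  rw [hq, of_mul_smul_map_of_mem f _ h.2, mul_inv_rev, map_mul, map_mul, mul_smul, mul_smul,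
    ← mul_smul (of k G g⁻¹), ← map_mul, inv_mul_cancel, map_one, one_smul]

theorem cosetSum_single_one_smul (f : W →ₗ[k[H]] V) (r : k) (w : W) :
    cosetSum f (single (1 : G) r • w) = single (1 : G) r • cosetSum f w := by
  simp only [cosetSum, Finset.smul_sum, ← single_one_smul_comm r,
    map_single_smul_of_mem f H.one_mem]

theorem cosetSum_smul (f : W →ₗ[k[H]] V) (a : k[G]) (w : W) :
    cosetSum f (a • w) = a • cosetSum f w := by
  induction a using induction_linear with
  | zero => simp only [zero_smul, cosetSum, map_zero, smul_zero, Finset.sum_const_zero]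
  | add a b ha hb => rw [add_smul, add_smul, cosetSum_add, ha, hb]
  | single g r =>
    have hsingle : single g r = of k G g * single (1 : G) r := by
      rw [of_apply, single_mul_single, mul_one, one_mul]
    rw [hsingle, mul_smul, mul_smul, cosetSum_of_smul, cosetSum_single_one_smul]

theorem map_cosetSum_of_forall_apply_eq (β : V →ₗ[k[G]] W) (f : W →ₗ[k[H]] V)
    (hf : ∀ w, β (f w) = w) (w : W) : β (cosetSum f w) = H.index • w := by
  simp only [cosetSum, map_sum, map_smul, hf, smul_smul, ← map_mul, mul_inv_cancel, map_one,
    one_smul, Finset.sum_const, Finset.card_univ, ← Nat.card_eq_fintype_card, Subgroup.index]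

variable (H) in
def cosetAverage (f : W →ₗ[k[H]] V) : W →ₗ[k[G]] V where
  toFun w := single (1 : G) (H.index : k)⁻¹ʳ • cosetSum f w
  map_add' w₁ w₂ := by rw [cosetSum_add, smul_add]
  map_smul' a w := by rw [cosetSum_smul, RingHom.id_apply, single_one_smul_comm]

theorem comp_cosetAverage_eq_id (hH : IsUnit (H.index : k)) (β : V →ₗ[k[G]] W)
    (f : W →ₗ[k[H]] V) (hf : ∀ w, β (f w) = w) : β ∘ₗ cosetAverage H f = LinearMap.id := by
  ext w
  change β (single (1 : G) (H.index : k)⁻¹ʳ • cosetSum f w) = w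
  rw [map_smul, map_cosetSum_of_forall_apply_eq β f hf, ← Nat.cast_smul_eq_nsmul k[G], smul_smul,
    natCast_def, single_mul_single, mul_one, Ring.inverse_mul_cancel _ hH, ← one_def, one_smul]

end Finite

theorem exists_comp_eq_id_iff_restrict [H.FiniteIndex] (hH : IsUnit (H.index : k))
    (β : V →ₗ[k[G]] W) :
    (∃ γ : W →ₗ[k[G]] V, β ∘ₗ γ = LinearMap.id) ↔ ∃ γ : W →ₗ[k[H]] V, ∀ w, β (γ w) = w := by
  have := Fintype.ofFinite (G ⧸ H)
  constructor
  · rintro ⟨γ, hγ⟩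
    exact ⟨γ.restrictSubgroup H, LinearMap.congr_fun hγ⟩
  · rintro ⟨γ, hγ⟩
    exact ⟨cosetAverage H γ, comp_cosetAverage_eq_id hH β γ hγ⟩

end MonoidAlgebra

end

theorem broue_split_iff_restriction_split_general
    (k : Type*) [Field k] (p : ℕ) [CharP k p]
    (Gt : Type*) [Group Gt] (G : Subgroup Gt)
    (hp : (Nat.card (Gt ⧸ G)).Coprime p)
    (S N : Type*) [AddCommGroup S] [AddCommGroup N]
    [Module (MonoidAlgebra k Gt) S]
    [Module (MonoidAlgebra k Gt) N]
    (β : S →ₗ[MonoidAlgebra k Gt] N) :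
    (∃ γ : N →ₗ[MonoidAlgebra k Gt] S, β ∘ₗ γ = LinearMap.id) ↔
      (letI : Module (MonoidAlgebra k ↥G) S :=
        Module.compHom S (MonoidAlgebra.mapDomainRingHom k G.subtype)
       letI : Module (MonoidAlgebra k ↥G) N :=
        Module.compHom N (MonoidAlgebra.mapDomainRingHom k G.subtype)
       ∃ γ : N →ₗ[MonoidAlgebra k ↥G] S, ∀ n : N, β (γ n) = n) := by
  have hunit : IsUnit (G.index : k) :=
    letI := invertibleOfCoprime (R := k) hp
    isUnit_of_invertible (Nat.card (Gt ⧸ G) : k)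
  have : G.FiniteIndex := ⟨fun h => hunit.ne_zero (by rw [h, Nat.cast_zero])⟩
  exact MonoidAlgebra.exists_comp_eq_id_iff_restrict hunit β

theorem broue_split_iff_restriction_split
    (k : Type*) [Field k] [IsAlgClosed k] (p : ℕ) [Fact p.Prime] [CharP k p]
    (Gt : Type*) [Group Gt] [Fintype Gt] (G : Subgroup Gt) [G.Normal]
    (hp : (Nat.card (Gt ⧸ G)).Coprime p)
    (M S N : Type*) [AddCommGroup M] [AddCommGroup S] [AddCommGroup N]
    [Module (MonoidAlgebra k Gt) M] [Module (MonoidAlgebra k Gt) S]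
    [Module (MonoidAlgebra k Gt) N]
    [Module.Finite (MonoidAlgebra k Gt) M] [Module.Finite (MonoidAlgebra k Gt) S]
    [Module.Finite (MonoidAlgebra k Gt) N]
    (α : M →ₗ[MonoidAlgebra k Gt] S) (β : S →ₗ[MonoidAlgebra k Gt] N)
    (hα : Function.Injective α) (hβ : Function.Surjective β)
    (hexact : Function.Exact α β) :
    (∃ γ : N →ₗ[MonoidAlgebra k Gt] S, β ∘ₗ γ = LinearMap.id) ↔
      (letI : Module (MonoidAlgebra k ↥G) S :=
        Module.compHom S (MonoidAlgebra.mapDomainRingHom k G.subtype)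
       letI : Module (MonoidAlgebra k ↥G) N :=
        Module.compHom N (MonoidAlgebra.mapDomainRingHom k G.subtype)
       ∃ γ : N →ₗ[MonoidAlgebra k ↥G] S, ∀ n : N, β (γ n) = n) :=
  broue_split_iff_restriction_split_general k p Gt G hp S N β
end

section
/- Every simple k[G]-module S, when induced up to G̃, gives a semisimple k[G̃]-module; that is, Ind_G^{G̃} S is a semisimple k[G̃]-module. -/
/-!
STATEMENT 1: Every simple `k[G]`-module `S`, when induced up to `G̃`, gives a semisimple
`k[G̃]`-module; that is, `Ind_G^{G̃} S` is a semisimple `k[G̃]`-module.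

Context: `k` is an algebraically closed field of prime characteristic `p`; `G̃` is a
finite group with a normal subgroup `G` such that `G̃/G` has order coprime to `p`.
The induced module `Ind_G^{G̃} S = k[G̃] ⊗_{k[G]} S` is realised as the quotient of the
`k`-tensor product `k[G̃] ⊗_k S` by the `k[G̃]`-submodule generated by the balancing
relations `(x · a) ⊗ s - x ⊗ (a • s)` for `a ∈ k[G]`.
-/

open MonoidAlgebra

/-- The submodule of balancing relations defining `k[G̃] ⊗_{k[G]} S` inside
`k[G̃] ⊗_k S`. -/
noncomputable def IndRel (k : Type*) [Field k] {Gt : Type*} [Group Gt] (G : Subgroup Gt)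
    (S : Type*) [AddCommGroup S] [Module k S] [Module (MonoidAlgebra k ↥G) S]
    [IsScalarTower k (MonoidAlgebra k ↥G) S] :
    Submodule (MonoidAlgebra k Gt) (TensorProduct k (MonoidAlgebra k Gt) S) :=
  Submodule.span (MonoidAlgebra k Gt)
    {z | ∃ (x : MonoidAlgebra k Gt) (a : MonoidAlgebra k ↥G) (s : S),
      z = (x * mapDomainRingHom k G.subtype a) ⊗ₜ[k] s - x ⊗ₜ[k] (a • s)}

/-- The induced module `Ind_G^{G̃} S = k[G̃] ⊗_{k[G]} S`, a `k[G̃]`-module. -/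
noncomputable def Ind (k : Type*) [Field k] {Gt : Type*} [Group Gt] (G : Subgroup Gt)
    (S : Type*) [AddCommGroup S] [Module k S] [Module (MonoidAlgebra k ↥G) S]
    [IsScalarTower k (MonoidAlgebra k ↥G) S] :=
  TensorProduct k (MonoidAlgebra k Gt) S ⧸ IndRel k G S

noncomputable instance (k : Type*) [Field k] {Gt : Type*} [Group Gt] (G : Subgroup Gt)
    (S : Type*) [AddCommGroup S] [Module k S] [Module (MonoidAlgebra k ↥G) S]
    [IsScalarTower k (MonoidAlgebra k ↥G) S] : AddCommGroup (Ind k G S) :=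
  Submodule.Quotient.addCommGroup _

noncomputable instance (k : Type*) [Field k] {Gt : Type*} [Group Gt] (G : Subgroup Gt)
    (S : Type*) [AddCommGroup S] [Module k S] [Module (MonoidAlgebra k ↥G) S]
    [IsScalarTower k (MonoidAlgebra k ↥G) S] : Module (MonoidAlgebra k Gt) (Ind k G S) :=
  Submodule.Quotient.module _

/-!
The argument is Clifford's theorem followed by relative Maschke. Since `G` is normal, for each
`t : G̃` the image of `s ↦ t ⊗ s` in `Ind S` is a `k[G]`-submodule on which `k[G]` acts through
conjugation by `t`, so it is zero or simple; these images span `Ind S`, hence `Ind S` is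
semisimple over `k[G]`. Given a `k[G̃]`-submodule `N`, a `k[G]`-linear projection onto `N`
becomes `k[G̃]`-linear after averaging its conjugates over representatives of `G̃ / G`, which
is possible because the index `[G̃ : G]` is invertible in `k`; its kernel complements `N`.
-/

open scoped Ring

theorem LinearMap.range_eq_bot_or_isAtom {R R₂ M M₂ : Type*} [Ring R] [Ring R₂]
    [AddCommGroup M] [Module R M] [AddCommGroup M₂] [Module R₂ M₂] {σ : R →+* R₂}
    [RingHomSurjective σ] [IsSimpleModule R M] (f : M →ₛₗ[σ] M₂) :
    LinearMap.range f = ⊥ ∨ IsAtom (LinearMap.range f) := by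
  refine or_iff_not_imp_left.mpr fun hf => ⟨hf, fun P hP => ?_⟩
  have hcomap : Submodule.comap f P ≠ ⊤ := fun h =>
    hP.not_ge (by rw [LinearMap.range_eq_map, ← h]; exact Submodule.map_comap_le f P)
  rw [← inf_eq_right.mpr hP.le, ← Submodule.map_comap_eq,
    (eq_bot_or_eq_top _).resolve_right hcomap, Submodule.map_bot]

theorem MonoidAlgebra.of_mul_mapDomain_subtype {k : Type*} [CommSemiring k] {Gt : Type*}
    [Group Gt] {G : Subgroup Gt} [G.Normal] (t : Gt) (a : k[G]) :
    of k Gt t * mapDomainRingHom k G.subtype a =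
      mapDomainRingHom k G.subtype (mapDomainRingEquiv k (MulAut.conjNormal t) a) * of k Gt t := by
  induction a using MonoidAlgebra.induction with
  | zero => simp
  | single_add g c a _ _ ih =>
    rw [map_add, map_add, mul_add, map_add, add_mul, ih]
    simp [mapDomain_single, single_mul_single, mul_assoc]

namespace LinearMap
variable {k : Type*} [CommRing k] {G : Type*} [Group G]
variable {V : Type*} [AddCommGroup V] [Module k V] [Module k[G] V] [IsScalarTower k k[G] V]
variable {W : Type*} [AddCommGroup W] [Module k W] [Module k[G] W] [IsScalarTower k k[G] W]
variable (π : W →ₗ[k] V)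

theorem conjugate_apply_of (g : G) (w : W) :
    π.conjugate g w = of k G g⁻¹ • π (of k G g • w) := rfl

theorem conjugate_mul_of_commute {h : G} (hπ : ∀ w, π (of k G h • w) = of k G h • π w)
    (g : G) :
    π.conjugate (h * g) = π.conjugate g := by
  ext w
  rw [conjugate_apply_of, conjugate_apply_of, map_mul, mul_smul, hπ, mul_inv_rev, map_mul,
    mul_smul, ← mul_smul (of k G h⁻¹), ← map_mul, inv_mul_cancel, map_one, one_smul]

theorem of_smul_conjugate_mul (x g : G) (w : W) :
    of k G g • π.conjugate (x * g) w = π.conjugate x (of k G g • w) := by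
  rw [conjugate_apply_of, conjugate_apply_of, map_mul, mul_smul, mul_inv_rev, map_mul, mul_smul,
    ← mul_smul (of k G g), ← map_mul, mul_inv_cancel, map_one, one_smul]

variable (H : Subgroup G)

theorem conjugate_inv_out_mk (hπ : ∀ h ∈ H, ∀ w, π (of k G h • w) = of k G h • π w)
    (g : G) : π.conjugate (QuotientGroup.mk g : G ⧸ H).out⁻¹ = π.conjugate g⁻¹ := by
  obtain ⟨h, hh⟩ := QuotientGroup.mk_out_eq_mul H g
  rw [hh, mul_inv_rev, conjugate_mul_of_commute π (hπ _ (inv_mem h.2))]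

variable [Fintype (G ⧸ H)]

noncomputable def sumOfCosetConjugates : W →ₗ[k] V :=
  ∑ q : G ⧸ H, π.conjugate q.out⁻¹

variable {π H}

theorem sumOfCosetConjugates_of_smul
    (hπ : ∀ h ∈ H, ∀ w, π (of k G h • w) = of k G h • π w) (g : G) (w : W) :
    π.sumOfCosetConjugates H (of k G g • w) = of k G g • π.sumOfCosetConjugates H w := by
  simp only [sumOfCosetConjugates, sum_apply, Finset.smul_sum]
  refine Fintype.sum_equiv (MulAction.toPerm g⁻¹) _ _ fun q => ?_
  rw [← of_smul_conjugate_mul, MulAction.toPerm_apply, ← MulAction.Quotient.mk_smul_out,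
    conjugate_inv_out_mk π H hπ (g⁻¹ • q.out), smul_eq_mul, mul_inv_rev, inv_inv]

end LinearMap

namespace MonoidAlgebra
variable {k : Type*} [CommRing k] {G : Type*} [Group G]

theorem Submodule.exists_isCompl_of_commute_subgroup {M : Type*} [AddCommGroup M] [Module k M]
    [Module k[G] M] [IsScalarTower k k[G] M] (H : Subgroup G) [H.FiniteIndex]
    (hH : IsUnit (H.index : k)) (N : Submodule k[G] M) (π : M →ₗ[k] M)
    (hπH : ∀ h ∈ H, ∀ m, π (of k G h • m) = of k G h • π m) (hπN : ∀ m, π m ∈ N)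
    (hπ : ∀ n ∈ N, π n = n) : ∃ Q : Submodule k[G] M, IsCompl N Q := by
  have := Fintype.ofFinite (G ⧸ H)
  let E : M →ₗ[k[G]] M := (H.index : k)⁻¹ʳ •
    equivariantOfLinearOfComm (π.sumOfCosetConjugates H) (π.sumOfCosetConjugates_of_smul hπH)
  have hE (m : M) : E m = (H.index : k)⁻¹ʳ • ∑ q : G ⧸ H, π.conjugate q.out⁻¹ m := by
    simp [E, LinearMap.sumOfCosetConjugates, LinearMap.sum_apply]
  have hconjN (t : G) (m : M) : π.conjugate t⁻¹ m ∈ N := N.smul_mem _ (hπN _)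
  have hconj (t : G) (n : M) (hn : n ∈ N) : π.conjugate t⁻¹ n = n := by
    rw [LinearMap.conjugate_apply_of, hπ _ (N.smul_mem _ hn), ← mul_smul, ← map_mul,
      inv_mul_cancel, map_one, one_smul]
  have hEN (m : M) : E m ∈ N := by
    rw [hE]
    exact N.smul_of_tower_mem _ (N.sum_mem fun q _ => hconjN _ m)
  have hEfix (n : N) : (E.codRestrict N hEN) n = n := by
    ext
    rw [LinearMap.codRestrict_apply, hE, Finset.sum_congr rfl fun q _ => hconj _ n n.2,
      Finset.sum_const, Finset.card_univ, ← Nat.card_eq_fintype_card, ← Subgroup.index,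
      ← Nat.cast_smul_eq_nsmul k, smul_smul, Ring.inverse_mul_cancel _ hH, one_smul]
  exact ⟨_, LinearMap.isCompl_of_proj hEfix⟩

theorem isSemisimpleModule_of_isSemisimpleModule_subgroup (H : Subgroup G) [H.FiniteIndex]
    (hH : IsUnit (H.index : k)) {M : Type*} [AddCommGroup M] [Module k[G] M] [Module k[H] M]
    (hres : ∀ (a : k[H]) (m : M), a • m = mapDomainRingHom k H.subtype a • m)
    [IsSemisimpleModule k[H] M] : IsSemisimpleModule k[G] M := by
  let : Module k M := .compHom M (algebraMap k k[G])
  have : IsScalarTower k k[G] M := .of_compHom k k[G] M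
  have : IsScalarTower k k[H] M := ⟨fun c a m => by
    rw [hres, hres]
    exact congr($(map_smul (mapDomainAlgHom k k H.subtype) c a) • m).trans (smul_assoc _ _ _)⟩
  let res : M →ₛₗ[mapDomainRingHom k H.subtype] M :=
    { AddMonoidHom.id M with map_smul' := hres }
  refine { exists_isCompl := fun N => ?_ }
  obtain ⟨Q, hQ⟩ := exists_isCompl (N.comap res)
  refine N.exists_isCompl_of_commute_subgroup H hH
    (((N.comap res).projection Q hQ).restrictScalars k) (fun h hh m => ?_)
    (Submodule.projection_apply_mem hQ) (fun n hn => Submodule.projection_apply_left hQ ⟨n, hn⟩)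
  have hof : of k G h = mapDomainRingHom k H.subtype (of k H ⟨h, hh⟩) := by
    simp [mapDomain_single]
  simp only [LinearMap.restrictScalars_apply, hof, ← hres, map_smul]

end MonoidAlgebra

namespace Ind
variable {k : Type*} [Field k] {Gt : Type*} [Group Gt] {G : Subgroup Gt}
  {S : Type*} [AddCommGroup S] [Module k S] [Module k[G] S] [IsScalarTower k k[G] S]

noncomputable def mk : TensorProduct k k[Gt] S →ₗ[k[Gt]] Ind k G S := (IndRel k G S).mkQ

theorem mk_surjective : Function.Surjective (mk : TensorProduct k k[Gt] S → Ind k G S) :=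
  Submodule.mkQ_surjective _

theorem mk_mul_tmul (x : k[Gt]) (a : k[G]) (s : S) :
    mk (G := G) ((x * mapDomainRingHom k G.subtype a) ⊗ₜ[k] s) = mk (x ⊗ₜ[k] (a • s)) :=
  (Submodule.Quotient.eq _).mpr (Submodule.subset_span ⟨x, a, s, rfl⟩)

noncomputable instance : Module k[G] (Ind k G S) := .compHom _ (mapDomainRingHom k G.subtype)

theorem subgroup_smul_def (a : k[G]) (m : Ind k G S) :
    a • m = mapDomainRingHom k G.subtype a • m :=
  rfl

variable [G.Normal]

noncomputable def ofTmul (t : Gt) :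
    S →ₛₗ[((mapDomainRingEquiv k (MulAut.conjNormal t) : k[G] ≃+* k[G]) : k[G] →+* k[G])]
      Ind k G S where
  toFun s := mk (of k Gt t ⊗ₜ[k] s)
  map_add' s s' := by rw [TensorProduct.tmul_add, map_add]
  map_smul' a s := by
    rw [subgroup_smul_def, ← map_smul, TensorProduct.smul_tmul', smul_eq_mul, RingHom.coe_coe,
      ← of_mul_mapDomain_subtype, mk_mul_tmul]

theorem iSup_range_ofTmul :
    ⨆ t : Gt, LinearMap.range (ofTmul (k := k) (G := G) (S := S) t) = ⊤ := by
  refine Submodule.eq_top_iff'.mpr fun m => ?_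
  obtain ⟨z, rfl⟩ := mk_surjective (G := G) (S := S) m
  induction z using TensorProduct.induction_on with
  | zero => exact zero_mem _
  | add z z' hz hz' => rw [map_add]; exact add_mem hz hz'
  | tmul x s =>
    induction x using MonoidAlgebra.induction_on generalizing s with
    | of t => exact Submodule.mem_iSup_of_mem t ⟨s, rfl⟩
    | add x y hx hy => rw [TensorProduct.add_tmul, map_add]; exact add_mem (hx s) (hy s)
    | smul c x hx => rw [TensorProduct.smul_tmul]; exact hx (c • s)

instance [IsSimpleModule k[G] S] : IsSemisimpleModule k[G] (Ind k G S) := by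
  refine .of_sSup_simples_eq_top (top_unique ?_)
  rw [← iSup_range_ofTmul]
  refine iSup_le fun t => ?_
  rcases (ofTmul (k := k) (G := G) (S := S) t).range_eq_bot_or_isAtom with h | h
  · exact h ▸ bot_le
  · exact le_sSup (isSimpleModule_iff_isAtom.mpr h)

end Ind

theorem isSemisimpleModule_ind_of_isSimpleModule_general
    (k : Type*) [Field k] (p : ℕ) [CharP k p]
    (Gt : Type*) [Group Gt] (G : Subgroup Gt) [G.Normal]
    (hp : (Nat.card (Gt ⧸ G)).Coprime p)
    (S : Type*) [AddCommGroup S] [Module k S] [Module (MonoidAlgebra k ↥G) S]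
    [IsScalarTower k (MonoidAlgebra k ↥G) S]
    [IsSimpleModule (MonoidAlgebra k ↥G) S] :
    IsSemisimpleModule (MonoidAlgebra k Gt) (Ind k G S) := by
  have hG : IsUnit (G.index : k) :=
    letI := invertibleOfCoprime (R := k) (n := G.index) hp
    isUnit_of_invertible _
  have : G.FiniteIndex := ⟨fun h => not_isUnit_zero (by rwa [h, Nat.cast_zero] at hG)⟩
  exact isSemisimpleModule_of_isSemisimpleModule_subgroup G hG fun _ _ => rfl

theorem isSemisimpleModule_ind_of_isSimpleModule
    (k : Type*) [Field k] [IsAlgClosed k] (p : ℕ) [Fact p.Prime] [CharP k p]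
    (Gt : Type*) [Group Gt] [Fintype Gt] (G : Subgroup Gt) [G.Normal]
    (hp : (Nat.card (Gt ⧸ G)).Coprime p)
    (S : Type*) [AddCommGroup S] [Module k S] [Module (MonoidAlgebra k ↥G) S]
    [IsScalarTower k (MonoidAlgebra k ↥G) S]
    [IsSimpleModule (MonoidAlgebra k ↥G) S] :
    IsSemisimpleModule (MonoidAlgebra k Gt) (Ind k G S) :=
  isSemisimpleModule_ind_of_isSimpleModule_general k p Gt G hp S
end
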